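/- arXiv:1402.6565 — 3 statements merged into one kernel-verified Lean document; each statement's English description precedes it below -/
import Mathlib

section
/- Let p be a prime and let m = a·p^k and n = b·p^k with k ≥ 0, 0 < a ≤ b < p, and a + b ≤ p (Case 6 of the recursive definition of s_p, with p^k ≤ n < p^{k+1} and m ≤ n). Then λ(m,n,p) is standard if and only if k = 0. -/
/-- The negative reverse of a sequence `(a₁, …, a_u)`, namely `(−a_u, …, −a₁)`. -/
def negRev (s : List ℤ) : List ℤ := s.reverse.map (fun x => -x)

/-- Fuel-based implementation of Barry's recursively defined sequence `s_p(m,n)`.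
In every recursive call the quantity `2*m + n` strictly decreases, so fuel
`2*m + n + 1` always suffices; see `sp` below. -/
def spAux (p : ℕ) : ℕ → ℕ → ℕ → List ℤ
  | 0, _, _ => []
  | (fuel+1), m, n =>
    if m = 0 then List.replicate n (0 : ℤ)
    else
      let k := Nat.log p n
      let q := p ^ k
      let b := n / q
      let d := n % q
      let a := m / q
      let c := m % q
      let s12 : List ℤ × List ℤ :=
        if p ^ (k+1) < m + n then
          -- Case 1
          (List.replicate (m + n - p ^ (k+1)) ((p ^ (k+1) : ℕ) : ℤ),
           spAux p fuel (p ^ (k+1) - n) (p ^ (k+1) - m))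
        else if q < c + d then
          -- Case 2
          (List.replicate (c + d - q) (((a + b + 1) * q : ℕ) : ℤ),
           spAux p fuel ((a + b + 1) * q - n) ((a + b + 1) * q - m))
        else if 1 ≤ c + d ∧ 0 < a then
          -- Case 3
          ((spAux p fuel (min c d) (max c d)).map (fun x => x + (((a + b) * q : ℕ) : ℤ)),
           spAux p fuel ((a + b) * q - n) ((a + b) * q - m))
        else if a = 0 ∧ 0 < d then
          -- Case 4
          (((spAux p fuel m (b * q - d)).filter (fun x => decide (x < 0))).map
              (fun x => x + ((2 * b * q : ℕ) : ℤ)),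
           List.replicate (n - m) (0 : ℤ))
        else if a = 0 ∧ d = 0 then
          -- Case 5
          (List.replicate m ((b * q : ℕ) : ℤ),
           List.replicate (b * q - m) (0 : ℤ))
        else
          -- Case 6
          (List.replicate q (((a + b - 1) * q : ℕ) : ℤ),
           spAux p fuel ((a - 1) * q) ((b - 1) * q))
      s12.1 ++ s12.2 ++ negRev s12.1

/-- Barry's sequence `s_p(m,n)`, a nonincreasing sequence of `m + n` integers. -/
def sp (p m n : ℕ) : List ℤ := spAux p (2 * m + n + 1) m n

/-- The Jordan partition `λ(m,n,p)`: the first `m` terms of `s_p(m,n)`. -/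
def jordanPartition (p m n : ℕ) : List ℤ := (sp p m n).take m

/-- `λ(m,n,p)` is standard iff `λ_i = m + n − 2i + 1` for all `1 ≤ i ≤ m`. -/
def IsStandard (p m n : ℕ) : Prop :=
  jordanPartition p m n =
    (List.range m).map (fun i => (m : ℤ) + (n : ℤ) - 2 * ((i : ℤ) + 1) + 1)

lemma spAux_case6 (p : ℕ) (hp : 2 ≤ p) (fuel m n k a b : ℕ)
    (hma : m = a * p ^ k) (hnb : n = b * p ^ k)
    (ha0 : 0 < a) (hab : a ≤ b) (hbp : b < p) (habp : a + b ≤ p) :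
    spAux p (fuel + 1) m n =
      List.replicate (p ^ k) (((a + b - 1) * p ^ k : ℕ) : ℤ) ++
        spAux p fuel ((a - 1) * p ^ k) ((b - 1) * p ^ k) ++
        negRev (List.replicate (p ^ k) (((a + b - 1) * p ^ k : ℕ) : ℤ)) := by
  have hq : 0 < p ^ k := pow_pos (by omega) k
  have hm0 : m ≠ 0 := by
    rw [hma]; positivity
  have hlog : Nat.log p n = k := by
    apply Nat.log_eq_of_pow_le_of_lt_pow
    · rw [hnb]; nlinarith
    · rw [hnb, pow_succ, mul_comm (p^k) p]
      exact (Nat.mul_lt_mul_right hq).mpr hbp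
  have hdvd : n / p ^ k = b := by rw [hnb, Nat.mul_div_cancel _ hq]
  have hmod : n % p ^ k = 0 := by rw [hnb, Nat.mul_mod_left]
  have hdvd' : m / p ^ k = a := by rw [hma, Nat.mul_div_cancel _ hq]
  have hmod' : m % p ^ k = 0 := by rw [hma, Nat.mul_mod_left]
  have h1 : ¬ p ^ (k+1) < m + n := by
    rw [hma, hnb, pow_succ, mul_comm (p^k) p]
    push_neg
    calc a * p^k + b * p^k = (a+b) * p^k := by ring
    _ ≤ p * p^k := Nat.mul_le_mul_right _ habp
  have ha0' : a ≠ 0 := by omega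
  rw [spAux]
  simp only [hm0, if_neg, hlog, hdvd, hmod, hdvd', hmod', if_false]
  simp [if_neg h1, ha0']

lemma coe_range_map (u : ℕ) (g : ℤ → ℤ) :
    ((List.range u).map (fun i => g ((i : ℤ)))) =
      (List.range u).map (fun i : ℕ => g ((i : ℤ))) := by
  simp only [List.bind_eq_flatMap, List.pure_def]
  rw [← List.map_eq_flatMap, List.map_map]
  rfl

lemma sp_prefix (p : ℕ) (hp : 2 ≤ p) :
    ∀ a b fuel, a ≤ b → b < p → a + b ≤ p → 2 * a ≤ fuel →
    ∃ t, spAux p fuel a b =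
      (List.range a).map (fun i : ℕ => (a : ℤ) + (b : ℤ) - 2 * ((i : ℤ) + 1) + 1) ++ t := by
  intro a
  induction a with
  | zero => intro b fuel _ _ _ _; exact ⟨spAux p fuel 0 b, by simp⟩
  | succ a ih =>
    intro b fuel hab hbp habp hfuel
    obtain ⟨f, rfl⟩ : ∃ f, fuel = f + 1 := ⟨fuel - 1, by omega⟩
    have hb1 : 1 ≤ b := by omega
    have hstep := spAux_case6 p hp f (a+1) b 0 (a+1) b (by simp) (by simp)
      (by omega) hab hbp habp
    simp only [pow_zero, mul_one, Nat.add_sub_cancel] at hstep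
    obtain ⟨t, ht⟩ := ih (b-1) f (by omega) (by omega) (by omega) (by omega)
    refine ⟨t ++ negRev (List.replicate 1 ((a + 1 + b - 1 : ℕ) : ℤ)), ?_⟩
    rw [hstep, ht, List.range_succ_eq_map, List.replicate_one]
    simp only [List.map_cons, List.map_map, List.cons_append, List.append_assoc,
      List.nil_append]
    congr 1
    · push_cast [show 1 ≤ a + 1 + b by omega]
      ring
    congr 1
    apply List.map_congr_left
    intro i _
    simp only [Function.comp_apply, Nat.succ_eq_add_one]
    push_cast [hb1]
    ring

lemma take_sp_k0 (p : ℕ) (hp : 2 ≤ p) (a b fuel : ℕ) (hab : a ≤ b) (hbp : b < p)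
    (habp : a + b ≤ p) (hfuel : 2 * a ≤ fuel) :
    (spAux p fuel a b).take a =
      (List.range a).map (fun i : ℕ => (a : ℤ) + (b : ℤ) - 2 * ((i : ℤ) + 1) + 1) := by
  obtain ⟨t, ht⟩ := sp_prefix p hp a b fuel hab hbp habp hfuel
  rw [ht, List.take_append_of_le_length (by simp), List.take_of_length_le (by simp)]

/-- **Proposition 1, Case 6 (Barry).** Let `p` be prime, `m = a·pᵏ` and `n = b·pᵏ`
with `k ≥ 0`, `0 < a ≤ b < p` and `a + b ≤ p`. Then `λ(m,n,p)` is standard iff `k = 0`. -/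
theorem jordanPartition_standard_iff_case6 (p : ℕ) (hp : Nat.Prime p)
    (m n k a b : ℕ) (hma : m = a * p ^ k) (hnb : n = b * p ^ k)
    (ha0 : 0 < a) (hab : a ≤ b) (hbp : b < p) (habp : a + b ≤ p) :
    IsStandard p m n ↔ k = 0 := by
  have hp2 : 2 ≤ p := hp.two_le
  have hq : 0 < p ^ k := pow_pos (by omega) k
  have hm1 : 1 ≤ m := by
    rw [hma]; exact Nat.one_le_iff_ne_zero.mpr (by positivity)
  constructor
  · intro hstd
    unfold IsStandard jordanPartition sp at hstd
    rw [coe_range_map,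
      spAux_case6 p hp2 (2*m+n) m n k a b hma hnb ha0 hab hbp habp] at hstd
    have h0 := congrArg (fun l => l[0]?) hstd
    rw [List.getElem?_take, if_pos (by omega), List.append_assoc,
      List.getElem?_append, if_pos (by simpa using hq),
      List.getElem?_replicate, if_pos hq,
      List.getElem?_map, List.getElem?_range (by omega)] at h0
    simp only [Option.map_some, Option.some.injEq] at h0
    have habk : 1 ≤ a + b := by omega
    rw [hma, hnb] at h0
    push_cast [habk] at h0
    have hpk1 : (p:ℤ) ^ k = 1 := by nlinarith [h0]
    have hpk : p ^ k = 1 := by exact_mod_cast hpk1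
    by_contra hk
    have : p ≤ p ^ k := Nat.le_self_pow hk p
    omega
  · intro hk
    subst hk
    simp only [pow_zero, mul_one] at hma hnb
    unfold IsStandard jordanPartition sp
    rw [coe_range_map, hma, hnb]
    exact take_sp_k0 p hp2 a b _ hab hbp habp (by omega)
end

section
/- Let p be a prime and let m and n be integers with 1 ≤ m ≤ n. Then s_p(m,n) is a nonincreasing sequence of m + n integers whose first m terms are positive, whose last m terms are negative, and whose middle n − m terms all equal 0; moreover s_p(m,n)(m+n+1−k) = −s_p(m,n)(k) for all 1 ≤ k ≤ m+n, where s_p(m,n)(k) denotes the k-th term. -/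
theorem negRev_length (s : List ℤ) : (negRev s).length = s.length := by
  simp [negRev]

theorem negRev_append (s t : List ℤ) : negRev (s ++ t) = negRev t ++ negRev s := by
  simp [negRev]

theorem negRev_negRev (s : List ℤ) : negRev (negRev s) = s := by
  simp [negRev, List.map_reverse, Function.comp]

theorem negRev_replicate (n : ℕ) (x : ℤ) :
    negRev (List.replicate n x) = List.replicate n (-x) := by
  simp [negRev]

theorem mem_negRev {x : ℤ} {s : List ℤ} : x ∈ negRev s ↔ -x ∈ s := by
  simp only [negRev, List.mem_map, List.mem_reverse]
  constructor
  · rintro ⟨a, ha, rfl⟩; simpa using ha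
  · intro h; exact ⟨-x, h, by ring⟩

theorem negRev_sorted {s : List ℤ} (h : s.Pairwise (· ≥ ·)) :
    (negRev s).Pairwise (· ≥ ·) := by
  unfold negRev
  apply List.Pairwise.map (R := fun a b : ℤ => b ≥ a)
  · intro a b hab; simpa using hab
  · exact List.pairwise_reverse.mpr h

theorem sorted_map_add {s : List ℤ} (K : ℤ) (h : s.Pairwise (· ≥ ·)) :
    (s.map (fun x => x + K)).Pairwise (· ≥ ·) := by
  apply List.Pairwise.map (R := fun a b : ℤ => a ≥ b)
  · intro a b hab; simpa using hab
  · exact h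

theorem sorted_replicate (n : ℕ) (x : ℤ) :
    (List.replicate n x).Pairwise (· ≥ ·) :=
  List.pairwise_replicate.mpr (Or.inr le_rfl)

/-- The key invariant: `s` looks like `t ++ 0^(n-m) ++ negRev t` with `t` the
sorted list of `m` positive entries, all in `[n-m+1, m+n-1]`. -/
def Good (m n : ℕ) (s : List ℤ) : Prop :=
  ∃ t : List ℤ, t.length = m ∧ t.Pairwise (· ≥ ·) ∧
    (∀ x ∈ t, (n : ℤ) - m + 1 ≤ x ∧ x ≤ (m : ℤ) + n - 1) ∧
    s = t ++ List.replicate (n - m) 0 ++ negRev t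

theorem good_zero (n : ℕ) : Good 0 n (List.replicate n (0 : ℤ)) :=
  ⟨[], rfl, List.Pairwise.nil, by simp, by simp [negRev]⟩

theorem good_length {m n : ℕ} {s : List ℤ} (hmn : m ≤ n) (h : Good m n s) :
    s.length = m + n := by
  obtain ⟨t, hlen, _, _, rfl⟩ := h
  simp [negRev_length, hlen]
  omega

theorem good_memBounds {m n : ℕ} {s : List ℤ} (hmn : m ≤ n) (h : Good m n s) :
    ∀ x ∈ s, -((m : ℤ) + n - 1) ≤ x ∧ x ≤ (m : ℤ) + n - 1 := by
  obtain ⟨t, hlen, _, hb, rfl⟩ := h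
  intro x hx
  simp only [List.mem_append] at hx
  rcases hx with (hx | hx) | hx
  · have := hb x hx
    constructor
    · have : (1:ℤ) ≤ x := by have := (hb x hx).1; push_cast at this ⊢; omega
      have hmn1 : (1:ℤ) ≤ (m:ℤ) + n - 1 ∨ t = [] := by
        rcases Nat.eq_zero_or_pos m with h0 | h0
        · right; exact List.length_eq_zero_iff.mp (by omega)
        · left; push_cast; omega
      rcases hmn1 with h1 | h1
      · omega
      · simp [h1] at hx
    · exact (hb x hx).2
  · have := List.eq_of_mem_replicate hx
    subst this
    have : n - m ≠ 0 := by intro h0; simp [h0] at hx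
    have : m < n := by omega
    push_cast; omega
  · rw [mem_negRev] at hx
    have := hb _ hx
    have h1 : (1:ℤ) ≤ -x := by
      have := (hb _ hx).1
      have : (n:ℤ) - m ≥ 0 := by push_cast; omega
      omega
    constructor <;> omega

theorem good_sorted {m n : ℕ} {s : List ℤ} (hmn : m ≤ n) (h : Good m n s) :
    s.Pairwise (· ≥ ·) := by
  obtain ⟨t, hlen, hsort, hb, rfl⟩ := h
  have hpos : ∀ x ∈ t, (1:ℤ) ≤ x := by
    intro x hx
    have := (hb x hx).1
    have : (0:ℤ) ≤ (n:ℤ) - m := by push_cast; omega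
    omega
  rw [List.append_assoc]
  refine List.pairwise_append.mpr ⟨hsort, ?_, ?_⟩
  · refine List.pairwise_append.mpr ⟨sorted_replicate _ _, negRev_sorted hsort, ?_⟩
    intro x hx y hy
    have := List.eq_of_mem_replicate hx; subst this
    rw [mem_negRev] at hy
    have := hpos _ hy; omega
  · intro x hx y hy
    have h1 := hpos x hx
    rcases List.mem_append.mp hy with hy | hy
    · have := List.eq_of_mem_replicate hy; omega
    · rw [mem_negRev] at hy; have := hpos _ hy; omega

theorem good_glue {m n m' n' : ℕ} {s1 s2 : List ℤ}
    (h2 : Good m' n' s2) (hmn : m ≤ n) (hm'n' : m' ≤ n')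
    (hlen : s1.length + m' = m) (hmid : m' + n = m + n') (hsum : m' + n' ≤ m + n)
    (hs1 : s1.Pairwise (· ≥ ·))
    (hb : ∀ x ∈ s1, ((n:ℤ) - m + 1 ≤ x ∧ x ≤ (m:ℤ) + n - 1) ∧ (m':ℤ) + n' - 1 ≤ x) :
    Good m n (s1 ++ s2 ++ negRev s1) := by
  obtain ⟨t, htlen, htsort, htb, rfl⟩ := h2
  refine ⟨s1 ++ t, by simp [htlen, hlen], ?_, ?_, ?_⟩
  · refine List.pairwise_append.mpr ⟨hs1, htsort, ?_⟩
    intro x hx y hy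
    have h1 := (hb x hx).2
    have h2 := (htb y hy).2
    omega
  · intro x hx
    rcases List.mem_append.mp hx with hx | hx
    · exact (hb x hx).1
    · have h1 := (htb x hx).1
      have h2 := (htb x hx).2
      constructor
      · have : (n':ℤ) - m' = (n:ℤ) - m := by push_cast [← hmid]; push_cast; omega
        omega
      · have : (m':ℤ) + n' ≤ (m:ℤ) + n := by exact_mod_cast Nat.cast_le.mpr hsum
        omega
  · have hrep : n - m = n' - m' := by omega
    rw [hrep, negRev_append]
    simp only [List.append_assoc]


theorem spAux_case1 (p fuel m n : ℕ) (hm : m ≠ 0)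
    (h1 : p ^ (Nat.log p n + 1) < m + n) :
    spAux p (fuel+1) m n =
      List.replicate (m + n - p ^ (Nat.log p n + 1)) ((p ^ (Nat.log p n + 1) : ℕ) : ℤ)
        ++ spAux p fuel (p ^ (Nat.log p n + 1) - n) (p ^ (Nat.log p n + 1) - m)
        ++ negRev (List.replicate (m + n - p ^ (Nat.log p n + 1)) ((p ^ (Nat.log p n + 1) : ℕ) : ℤ)) := by
  simp only [spAux, if_neg hm, if_pos h1]

/-! ### Unfolding lemmas for `spAux` -/

theorem spAux_case2 (p fuel m n : ℕ) (hm : m ≠ 0)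
    (h1 : ¬ p ^ (Nat.log p n + 1) < m + n)
    (h2 : p ^ Nat.log p n < m % p ^ Nat.log p n + n % p ^ Nat.log p n) :
    spAux p (fuel+1) m n =
      List.replicate (m % p ^ Nat.log p n + n % p ^ Nat.log p n - p ^ Nat.log p n)
          (((m / p ^ Nat.log p n + n / p ^ Nat.log p n + 1) * p ^ Nat.log p n : ℕ) : ℤ)
        ++ spAux p fuel ((m / p ^ Nat.log p n + n / p ^ Nat.log p n + 1) * p ^ Nat.log p n - n)
            ((m / p ^ Nat.log p n + n / p ^ Nat.log p n + 1) * p ^ Nat.log p n - m)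
        ++ negRev (List.replicate (m % p ^ Nat.log p n + n % p ^ Nat.log p n - p ^ Nat.log p n)
            (((m / p ^ Nat.log p n + n / p ^ Nat.log p n + 1) * p ^ Nat.log p n : ℕ) : ℤ)) := by
  simp only [spAux, if_neg hm, if_neg h1, if_pos h2]

theorem spAux_case3 (p fuel m n : ℕ) (hm : m ≠ 0)
    (h1 : ¬ p ^ (Nat.log p n + 1) < m + n)
    (h2 : ¬ p ^ Nat.log p n < m % p ^ Nat.log p n + n % p ^ Nat.log p n)
    (h3 : 1 ≤ m % p ^ Nat.log p n + n % p ^ Nat.log p n ∧ 0 < m / p ^ Nat.log p n) :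
    spAux p (fuel+1) m n =
      (spAux p fuel (min (m % p ^ Nat.log p n) (n % p ^ Nat.log p n))
          (max (m % p ^ Nat.log p n) (n % p ^ Nat.log p n))).map
          (fun x => x + (((m / p ^ Nat.log p n + n / p ^ Nat.log p n) * p ^ Nat.log p n : ℕ) : ℤ))
        ++ spAux p fuel ((m / p ^ Nat.log p n + n / p ^ Nat.log p n) * p ^ Nat.log p n - n)
            ((m / p ^ Nat.log p n + n / p ^ Nat.log p n) * p ^ Nat.log p n - m)
        ++ negRev ((spAux p fuel (min (m % p ^ Nat.log p n) (n % p ^ Nat.log p n))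
            (max (m % p ^ Nat.log p n) (n % p ^ Nat.log p n))).map
            (fun x => x + (((m / p ^ Nat.log p n + n / p ^ Nat.log p n) * p ^ Nat.log p n : ℕ) : ℤ))) := by
  simp only [spAux, if_neg hm, if_neg h1, if_neg h2, if_pos h3]

theorem spAux_case4 (p fuel m n : ℕ) (hm : m ≠ 0)
    (h1 : ¬ p ^ (Nat.log p n + 1) < m + n)
    (h2 : ¬ p ^ Nat.log p n < m % p ^ Nat.log p n + n % p ^ Nat.log p n)
    (h3 : ¬ (1 ≤ m % p ^ Nat.log p n + n % p ^ Nat.log p n ∧ 0 < m / p ^ Nat.log p n))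
    (h4 : m / p ^ Nat.log p n = 0 ∧ 0 < n % p ^ Nat.log p n) :
    spAux p (fuel+1) m n =
      ((spAux p fuel m (n / p ^ Nat.log p n * p ^ Nat.log p n - n % p ^ Nat.log p n)).filter
          (fun x => decide (x < 0))).map
          (fun x => x + ((2 * (n / p ^ Nat.log p n) * p ^ Nat.log p n : ℕ) : ℤ))
        ++ List.replicate (n - m) (0 : ℤ)
        ++ negRev (((spAux p fuel m (n / p ^ Nat.log p n * p ^ Nat.log p n - n % p ^ Nat.log p n)).filter
            (fun x => decide (x < 0))).map
            (fun x => x + ((2 * (n / p ^ Nat.log p n) * p ^ Nat.log p n : ℕ) : ℤ))) := by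
  simp only [spAux, if_neg hm, if_neg h1, if_neg h2, if_neg h3, if_pos h4]

theorem spAux_case5 (p fuel m n : ℕ) (hm : m ≠ 0)
    (h1 : ¬ p ^ (Nat.log p n + 1) < m + n)
    (h2 : ¬ p ^ Nat.log p n < m % p ^ Nat.log p n + n % p ^ Nat.log p n)
    (h3 : ¬ (1 ≤ m % p ^ Nat.log p n + n % p ^ Nat.log p n ∧ 0 < m / p ^ Nat.log p n))
    (h4 : ¬ (m / p ^ Nat.log p n = 0 ∧ 0 < n % p ^ Nat.log p n))
    (h5 : m / p ^ Nat.log p n = 0 ∧ n % p ^ Nat.log p n = 0) :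
    spAux p (fuel+1) m n =
      List.replicate m ((n / p ^ Nat.log p n * p ^ Nat.log p n : ℕ) : ℤ)
        ++ List.replicate (n / p ^ Nat.log p n * p ^ Nat.log p n - m) (0 : ℤ)
        ++ negRev (List.replicate m ((n / p ^ Nat.log p n * p ^ Nat.log p n : ℕ) : ℤ)) := by
  simp only [spAux, if_neg hm, if_neg h1, if_neg h2, if_neg h3, if_neg h4, if_pos h5]

theorem spAux_case6_s13 (p fuel m n : ℕ) (hm : m ≠ 0)
    (h1 : ¬ p ^ (Nat.log p n + 1) < m + n)
    (h2 : ¬ p ^ Nat.log p n < m % p ^ Nat.log p n + n % p ^ Nat.log p n)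
    (h3 : ¬ (1 ≤ m % p ^ Nat.log p n + n % p ^ Nat.log p n ∧ 0 < m / p ^ Nat.log p n))
    (h4 : ¬ (m / p ^ Nat.log p n = 0 ∧ 0 < n % p ^ Nat.log p n))
    (h5 : ¬ (m / p ^ Nat.log p n = 0 ∧ n % p ^ Nat.log p n = 0)) :
    spAux p (fuel+1) m n =
      List.replicate (p ^ Nat.log p n)
          (((m / p ^ Nat.log p n + n / p ^ Nat.log p n - 1) * p ^ Nat.log p n : ℕ) : ℤ)
        ++ spAux p fuel ((m / p ^ Nat.log p n - 1) * p ^ Nat.log p n)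
            ((n / p ^ Nat.log p n - 1) * p ^ Nat.log p n)
        ++ negRev (List.replicate (p ^ Nat.log p n)
            (((m / p ^ Nat.log p n + n / p ^ Nat.log p n - 1) * p ^ Nat.log p n : ℕ) : ℤ)) := by
  simp only [spAux, if_neg hm, if_neg h1, if_neg h2, if_neg h3, if_neg h4, if_neg h5]

theorem spAux_good (p : ℕ) (hp : 2 ≤ p) :
    ∀ fuel m n, m ≤ n → 2 * m + n < fuel → Good m n (spAux p fuel m n) := by
  intro fuel
  induction fuel with
  | zero => intro m n _ h; omega
  | succ fuel ih =>
    intro m n hmn hfuel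
    rcases Nat.eq_zero_or_pos m with hm0 | hm0
    · subst hm0
      have h0 : spAux p (fuel+1) 0 n = List.replicate n (0 : ℤ) := rfl
      rw [h0]; exact good_zero n
    have hm : m ≠ 0 := by omega
    have hn : n ≠ 0 := by omega
    set q := p ^ Nat.log p n with hqdef
    set P := p ^ (Nat.log p n + 1) with hPdef
    set b := n / q with hbdef
    set d := n % q with hddef
    set a := m / q with hadef
    set c := m % q with hcdef
    have hq1 : 1 ≤ q := Nat.one_le_pow _ _ (by omega)
    have hqn : q ≤ n := Nat.pow_log_le_self p hn
    have hnP : n < P := Nat.lt_pow_succ_log_self hp n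
    have hP2q : 2 * q ≤ P := by
      have h1 : P = q * p := by rw [hPdef, hqdef, pow_succ]
      have h2 : q * 2 ≤ q * p := Nat.mul_le_mul_left _ hp
      omega
    have hnbd : b * q + d = n := by
      have h := Nat.div_add_mod n q
      rw [← hbdef, ← hddef, Nat.mul_comm] at h
      exact h
    have hmac : a * q + c = m := by
      have h := Nat.div_add_mod m q
      rw [← hadef, ← hcdef, Nat.mul_comm] at h
      exact h
    have hdq : d < q := Nat.mod_lt _ (by omega)
    have hcq : c < q := Nat.mod_lt _ (by omega)
    have hbq : 1 ≤ b := Nat.one_le_div_iff (by omega) |>.mpr hqn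
    have hB : q ≤ b * q := Nat.le_mul_of_pos_left q hbq
    have hab : a ≤ b := Nat.div_le_div_right hmn
    have habq : a * q ≤ b * q := Nat.mul_le_mul_right q hab
    by_cases h1 : P < m + n
    · rw [spAux_case1 p fuel m n hm h1]
      rw [← hPdef]
      refine good_glue (ih (P - n) (P - m) (by omega) (by omega)) hmn (by omega)
        (by simp; omega) (by omega) (by omega) (sorted_replicate _ _) ?_
      intro x hx
      have hxP := List.eq_of_mem_replicate hx
      subst hxP
      refine ⟨⟨by omega, by omega⟩, by omega⟩
    · by_cases h2 : q < c + d
      · rw [spAux_case2 p fuel m n hm h1 h2]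
        rw [← hqdef, ← hbdef, ← hddef, ← hadef, ← hcdef]
        have hE : (a + b + 1) * q = a * q + b * q + q := by ring
        refine good_glue (ih ((a+b+1)*q - n) ((a+b+1)*q - m) (by omega) (by omega)) hmn
          (by omega) (by simp; omega) (by omega) (by omega) (sorted_replicate _ _) ?_
        intro x hx
        have hxP := List.eq_of_mem_replicate hx
        subst hxP
        refine ⟨⟨by omega, by omega⟩, by omega⟩
      · by_cases h3 : 1 ≤ c + d ∧ 0 < a
        · rw [spAux_case3 p fuel m n hm h1 h2 h3]
          rw [← hqdef, ← hbdef, ← hddef, ← hadef, ← hcdef]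
          have hE : (a + b) * q = a * q + b * q := by ring
          have hA : q ≤ a * q := Nat.le_mul_of_pos_left q h3.2
          have hminmax : min c d + max c d = c + d := by omega
          have hminle : min c d ≤ max c d := by omega
          have hgood0 : Good (min c d) (max c d) (spAux p fuel (min c d) (max c d)) :=
            ih _ _ hminle (by omega)
          have hlen0 : (spAux p fuel (min c d) (max c d)).length = min c d + max c d :=
            good_length hminle hgood0
          have hbnd0 := good_memBounds hminle hgood0
          refine good_glue (ih ((a+b)*q - n) ((a+b)*q - m) (by omega) (by omega)) hmn
            (by omega) (by simp [hlen0]; omega) (by omega) (by omega)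
            (sorted_map_add _ (good_sorted hminle hgood0)) ?_
          intro x hx
          simp only [List.mem_map] at hx
          obtain ⟨y, hy, rfl⟩ := hx
          have hy1 := (hbnd0 y hy).1
          have hy2 := (hbnd0 y hy).2
          refine ⟨⟨by omega, by omega⟩, by omega⟩
        · by_cases h4 : a = 0 ∧ 0 < d
          · rw [spAux_case4 p fuel m n hm h1 h2 h3 h4]
            rw [← hqdef, ← hbdef, ← hddef]
            have hcast : ((2 * b * q : ℕ) : ℤ) = 2 * ((b * q : ℕ) : ℤ) := by
              push_cast; ring
            rw [hcast]
            have hc : c = m := by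
              have h := hmac
              rw [h4.1, Nat.zero_mul] at h
              omega
            have hcd : c + d ≤ q := by omega
            have hmν : m ≤ b * q - d := by omega
            have hgood0 : Good m (b * q - d) (spAux p fuel m (b * q - d)) :=
              ih _ _ hmν (by omega)
            obtain ⟨t0, ht0len, ht0sort, ht0b, ht0eq⟩ := hgood0
            have ht0pos : ∀ x ∈ t0, (1:ℤ) ≤ x := by
              intro x hx
              have := (ht0b x hx).1
              omega
            have hfilter : (spAux p fuel m (b * q - d)).filter (fun x => decide (x < 0))
                = negRev t0 := by
              rw [ht0eq, List.filter_append, List.filter_append]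
              rw [List.filter_eq_nil_iff.mpr (by
                intro x hx
                simp only [decide_eq_true_eq, not_lt]
                have := ht0pos x hx; omega)]
              rw [List.filter_eq_nil_iff.mpr (by
                intro x hx
                have := List.eq_of_mem_replicate hx
                simp [this])]
              rw [List.filter_eq_self.mpr (by
                intro x hx
                rw [mem_negRev] at hx
                have := ht0pos _ hx
                simp only [decide_eq_true_eq]
                omega)]
              simp
            rw [hfilter]
            refine ⟨(negRev t0).map (fun x => x + 2 * ((b * q : ℕ) : ℤ)), ?_, ?_, ?_, rfl⟩
            · simp [negRev_length, ht0len]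
            · exact sorted_map_add _ (negRev_sorted ht0sort)
            · intro x hx
              simp only [List.mem_map] at hx
              obtain ⟨y, hy, rfl⟩ := hx
              rw [mem_negRev] at hy
              have hb1 := (ht0b _ hy).1
              have hb2 := (ht0b _ hy).2
              constructor <;> omega
          · by_cases h5 : a = 0 ∧ d = 0
            · rw [spAux_case5 p fuel m n hm h1 h2 h3 h4 h5]
              rw [← hqdef, ← hbdef]
              have hnb : b * q = n := by omega
              rw [hnb]
              refine ⟨List.replicate m ((n : ℕ) : ℤ), by simp, sorted_replicate _ _, ?_, rfl⟩
              intro x hx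
              have := List.eq_of_mem_replicate hx
              subst this
              constructor <;> omega
            · rw [spAux_case6_s13 p fuel m n hm h1 h2 h3 h4 h5]
              rw [← hqdef, ← hbdef, ← hadef]
              have ha1 : 1 ≤ a := by
                rcases Nat.eq_zero_or_pos a with h | h
                · exact absurd ⟨h, Nat.pos_of_ne_zero (fun hd => h5 ⟨h, hd⟩)⟩ h4
                · exact h
              have hcd0 : c = 0 ∧ d = 0 := by
                have hne : ¬ 1 ≤ c + d := fun hcd => h3 ⟨hcd, ha1⟩
                omega
              have hA : q ≤ a * q := Nat.le_mul_of_pos_left q ha1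
              have hE : (a + b - 1) * q = a * q + b * q - q := by
                have h' : (a + b - 1) * q + 1 * q = (a + b - 1 + 1) * q := by
                  rw [add_mul]
                have h'' : a + b - 1 + 1 = a + b := by omega
                have h''' : (a + b) * q = a * q + b * q := by ring
                rw [h''] at h'
                omega
              have hE1 : (a - 1) * q + 1 * q = (a - 1 + 1) * q := by rw [add_mul]
              have hE1' : a - 1 + 1 = a := by omega
              have hE2 : (b - 1) * q + 1 * q = (b - 1 + 1) * q := by rw [add_mul]
              have hE2' : b - 1 + 1 = b := by omega
              rw [hE1'] at hE1
              rw [hE2'] at hE2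
              refine good_glue (ih ((a-1)*q) ((b-1)*q) (by omega) (by omega)) hmn
                (by omega) (by simp; omega) (by omega) (by omega)
                (sorted_replicate _ _) ?_
              intro x hx
              have := List.eq_of_mem_replicate hx
              subst this
              refine ⟨⟨by omega, by omega⟩, by omega⟩

theorem good_negRev_self {m n : ℕ} {s : List ℤ} (h : Good m n s) : negRev s = s := by
  obtain ⟨t, _, _, _, rfl⟩ := h
  simp [negRev_append, negRev_negRev, negRev_replicate]

theorem getD_negRev (s : List ℤ) (i : ℕ) (hi : i < s.length) :
    (negRev s).getD i 0 = -(s.getD (s.length - 1 - i) 0) := by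
  have h1 : i < (negRev s).length := by rw [negRev_length]; exact hi
  have h2 : s.length - 1 - i < s.length := by omega
  rw [List.getD_eq_getElem _ _ h1, List.getD_eq_getElem _ _ h2]
  simp [negRev, List.getElem_map, List.getElem_reverse]


/-- Structural properties of `s_p(m,n)` for `1 ≤ m ≤ n`: it is a nonincreasing
sequence of `m + n` integers whose first `m` terms are positive, whose last `m` terms
are negative, and whose middle `n − m` terms all equal `0`; moreover it is balanced
around its middle: `s_p(m,n)(m+n+1−k) = −s_p(m,n)(k)` for `1 ≤ k ≤ m+n`
(here terms are accessed zero-indexed via `getD`). -/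
theorem sp_structure (p : ℕ) (hp : Nat.Prime p) (m n : ℕ) (hm : 1 ≤ m) (hmn : m ≤ n) :
    (sp p m n).length = m + n ∧
    (sp p m n).Pairwise (· ≥ ·) ∧
    (∀ i, i < m → 0 < (sp p m n).getD i 0) ∧
    (∀ i, m ≤ i → i < n → (sp p m n).getD i 0 = 0) ∧
    (∀ i, n ≤ i → i < m + n → (sp p m n).getD i 0 < 0) ∧
    (∀ k, 1 ≤ k → k ≤ m + n →
      (sp p m n).getD (m + n - k) 0 = -((sp p m n).getD (k - 1) 0)) := by
  have hp2 : 2 ≤ p := hp.two_le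
  have hg : Good m n (sp p m n) := spAux_good p hp2 _ m n hmn (by omega)
  have hlen : (sp p m n).length = m + n := good_length hmn hg
  have hsort : (sp p m n).Pairwise (· ≥ ·) := good_sorted hmn hg
  have hns : negRev (sp p m n) = sp p m n := good_negRev_self hg
  obtain ⟨t, htlen, htsort, htb, hseq⟩ := hg
  have htpos : ∀ x ∈ t, (1:ℤ) ≤ x := by
    intro x hx
    have := (htb x hx).1
    omega
  refine ⟨hlen, hsort, ?_, ?_, ?_, ?_⟩
  · intro i hi
    have hit : i < t.length := by omega
    rw [hseq, List.append_assoc, List.getD_append _ _ _ _ hit,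
      List.getD_eq_getElem _ _ hit]
    have hmem : t[i] ∈ t := List.getElem_mem hit
    have := htpos _ hmem
    omega
  · intro i him hin
    have hit : t.length ≤ i := by omega
    rw [hseq, List.append_assoc, List.getD_append_right _ _ _ _ hit]
    have hrep : i - t.length < (List.replicate (n - m) (0:ℤ)).length := by
      simp [List.length_replicate]; omega
    rw [List.getD_append _ _ _ _ hrep, List.getD_eq_getElem _ _ hrep,
      List.getElem_replicate]
  · intro i hin himn
    have hit : t.length ≤ i := by omega
    rw [hseq, List.append_assoc, List.getD_append_right _ _ _ _ hit]
    have hrep : (List.replicate (n - m) (0:ℤ)).length ≤ i - t.length := by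
      simp [List.length_replicate]; omega
    rw [List.getD_append_right _ _ _ _ hrep]
    have hj : i - t.length - (List.replicate (n - m) (0:ℤ)).length < (negRev t).length := by
      simp [List.length_replicate, negRev_length]; omega
    rw [List.getD_eq_getElem _ _ hj]
    have hmem : (negRev t)[i - t.length - (List.replicate (n - m) (0:ℤ)).length] ∈ negRev t :=
      List.getElem_mem hj
    rw [mem_negRev] at hmem
    have := htpos _ hmem
    omega
  · intro k hk1 hk2
    have hkey : (sp p m n).getD (k-1) 0 = -((sp p m n).getD ((sp p m n).length - 1 - (k-1)) 0) := by
      conv_lhs => rw [← hns]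
      exact getD_negRev _ _ (by omega)
    have hidx : (sp p m n).length - 1 - (k-1) = m + n - k := by omega
    rw [hidx] at hkey
    omega
end

section
/- Let p be a prime and let a and b be integers with 1 ≤ a ≤ b < p and a + b ≤ p. Then λ(a,b,p) = (a+b−1, a+b−3, …, b−a+1); in particular λ(a,b,p) is standard. -/
/-- Explicit form of `s_p(a,b)` in the small regime. -/
def spSmall (a b : ℕ) : List ℤ :=
  (List.range a).map (fun i : ℕ => (a:ℤ)+(b:ℤ)-1-2*(i:ℤ))
    ++ List.replicate (b-a) (0:ℤ)
    ++ (List.range a).map (fun i : ℕ => -((b:ℤ)-(a:ℤ)+1+2*(i:ℤ)))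

lemma spSmall_succ (a b : ℕ) (h : a ≤ b) :
    spSmall (a+1) (b+1) =
      ((a:ℤ)+(b:ℤ)+1) :: (spSmall a b ++ [-((a:ℤ)+(b:ℤ)+1)]) := by
  unfold spSmall
  have h1 : (List.range (a+1)).map (fun i : ℕ => ((a:ℤ)+1)+((b:ℤ)+1)-1-2*(i:ℤ))
      = ((a:ℤ)+(b:ℤ)+1) :: (List.range a).map (fun i : ℕ => (a:ℤ)+(b:ℤ)-1-2*(i:ℤ)) := by
    rw [List.range_succ_eq_map, List.map_cons, List.map_map]
    refine congrArg₂ _ (by push_cast; ring) ?_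
    refine List.map_congr_left fun i _ => ?_
    simp only [Function.comp_apply, Nat.succ_eq_add_one]
    push_cast; ring
  have h3 : (List.range (a+1)).map (fun i : ℕ => -(((b:ℤ)+1)-((a:ℤ)+1)+1+2*(i:ℤ)))
      = (List.range a).map (fun i : ℕ => -((b:ℤ)-(a:ℤ)+1+2*(i:ℤ))) ++ [-((a:ℤ)+(b:ℤ)+1)] := by
    rw [List.range_succ, List.map_append, List.map_singleton]
    refine congrArg₂ _ (List.map_congr_left fun i _ => by push_cast; ring) ?_
    norm_num; ring
  push_cast
  rw [h1, h3]
  simp [List.append_assoc]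

lemma spAux_small (p : ℕ) : ∀ fuel a b, a ≤ fuel → a ≤ b → b < p → a + b ≤ p →
    spAux p (fuel+1) a b = spSmall a b := by
  intro fuel
  induction fuel with
  | zero =>
    intro a b hfa hab hbp habp
    interval_cases a
    simp [spAux, spSmall, negRev]
  | succ fuel ih =>
    intro a b hfa hab hbp habp
    rcases Nat.eq_zero_or_pos a with rfl | ha
    · simp [spAux, spSmall, negRev]
    · obtain ⟨a', rfl⟩ : ∃ a', a = a'+1 := ⟨a-1, by omega⟩
      obtain ⟨b', rfl⟩ : ∃ b', b = b'+1 := ⟨b-1, by omega⟩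
      have hlog : Nat.log p (b'+1) = 0 := Nat.log_eq_zero_iff.mpr (Or.inl hbp)
      rw [spAux]
      simp only [hlog, pow_zero, zero_add, pow_one, Nat.div_one, Nat.mod_one, mul_one,
        Nat.succ_ne_zero, if_false]
      rw [if_neg (by omega), if_neg (by norm_num), if_neg (by norm_num),
        if_neg (by norm_num), if_neg (by norm_num)]
      simp only [Nat.add_sub_cancel]
      rw [ih a' b' (by omega) (by omega) (by omega) (by omega)]
      rw [spSmall_succ a' b' (by omega)]
      simp only [negRev, List.reverse_replicate, List.map_replicate,
        List.replicate_one, List.reverse_singleton, List.map_singleton]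
      rw [show (a'+1+(b'+1)-1 : ℕ) = a'+b'+1 from by omega]
      push_cast
      simp [List.append_assoc]

/-- If `1 ≤ a ≤ b < p` and `a + b ≤ p`, then `λ(a,b,p) = (a+b−1, a+b−3, …, b−a+1)`;
in particular `λ(a,b,p)` is standard. -/
theorem jordanPartition_small (p : ℕ) (hp : Nat.Prime p)
    (a b : ℕ) (ha : 1 ≤ a) (hab : a ≤ b) (hbp : b < p) (habp : a + b ≤ p) :
    jordanPartition p a b =
      (List.range a).map (fun i => (a : ℤ) + (b : ℤ) - 1 - 2 * (i : ℤ)) ∧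
    IsStandard p a b := by
  have h := spAux_small p (2*a+b) a b (by omega) hab hbp habp
  have key : jordanPartition p a b =
      (List.range a).map (fun i : ℕ => (a:ℤ)+(b:ℤ)-1-2*(i:ℤ)) := by
    rw [jordanPartition, sp, show 2*a+b+1 = (2*a+b)+1 from rfl, h, spSmall]
    rw [List.take_append_of_le_length (by simp)]
    simp
  have hflat : ((List.range a).flatMap fun i : ℕ => ([((i:ℕ):ℤ)] : List ℤ))
      = (List.range a).map (fun i : ℕ => (i:ℤ)) := List.flatMap_pure_eq_map _ _
  constructor
  · rw [key]
    show _ = List.map _ ((List.range a).flatMap fun i : ℕ => ([((i:ℕ):ℤ)] : List ℤ))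
    rw [hflat, List.map_map]
    exact List.map_congr_left fun i _ => rfl
  · rw [IsStandard, key]
    show _ = List.map _ ((List.range a).flatMap fun i : ℕ => ([((i:ℕ):ℤ)] : List ℤ))
    rw [hflat, List.map_map]
    exact List.map_congr_left fun i _ => by simp [Function.comp]; ring
end
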